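/- arXiv:2211.05769 — 3 statements merged into one kernel-verified Lean document; each statement's English description precedes it below -/
import Mathlib

section
/- The supreme sets form a laminar family: no two supreme sets cross, i.e., for supreme sets μ(R₁) and μ(R₂), either they are disjoint, or one is contained in the other. -/
variable {V : Type*}

def IsSteinerCut (T X : Set V) : Prop := (X ∩ T).Nonempty ∧ ¬ T ⊆ X

def SteinerExtreme (d : Set V → ℝ) (T X : Set V) : Prop :=
  IsSteinerCut T X ∧ ∀ Y, IsSteinerCut T Y → Y ⊂ X → d X < d Y

def Crosses (X Y : Set V) : Prop :=
  (X ∩ Y).Nonempty ∧ (X \ Y).Nonempty ∧ (Y \ X).Nonempty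

def supremeSet (d : Set V → ℝ) (T R : Set V) : Set V :=
  ⋃₀ {X | SteinerExtreme d T X ∧ X ∩ T = R}

/-- If two extreme sets cross, then one of the two difference sides contains
no terminal (by posimodularity). -/
lemma cross_noterm (d : Set V → ℝ) (T X Y : Set V)
    (hpos : ∀ A B : Set V, d (A \ B) + d (B \ A) ≤ d A + d B)
    (hX : SteinerExtreme d T X) (hY : SteinerExtreme d T Y)
    (hc : Crosses X Y) : (X \ Y) ∩ T = ∅ ∨ (Y \ X) ∩ T = ∅ := by
  by_contra h
  push_neg at h
  obtain ⟨h1, h2⟩ := h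
  obtain ⟨a, ha⟩ := h1
  obtain ⟨b, hb⟩ := h2
  obtain ⟨c, hc1, hc2⟩ := hc.1
  have cutXY : IsSteinerCut T (X \ Y) :=
    ⟨⟨a, ha⟩, fun h => hb.1.2 (h hb.2).1⟩
  have cutYX : IsSteinerCut T (Y \ X) :=
    ⟨⟨b, hb⟩, fun h => ha.1.2 (h ha.2).1⟩
  have sXY : X \ Y ⊂ X :=
    ⟨Set.diff_subset, fun h => (h hc1).2 hc2⟩
  have sYX : Y \ X ⊂ Y :=
    ⟨Set.diff_subset, fun h => (h hc2).2 hc1⟩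
  have e1 : d X < d (X \ Y) := hX.2 _ cutXY sXY
  have e2 : d Y < d (Y \ X) := hY.2 _ cutYX sYX
  have := hpos X Y
  linarith

/-- If X and Y are extreme and X carries no terminal outside Y, then X ∪ Y is
extreme (by submodularity, via downward induction on the size of subsets). -/
lemma extreme_union [Fintype V] (d : Set V → ℝ) (T X Y : Set V)
    (hsub : ∀ A B : Set V, d (A ∩ B) + d (A ∪ B) ≤ d A + d B)
    (hX : SteinerExtreme d T X) (hY : SteinerExtreme d T Y)
    (hXY : (X \ Y) ∩ T = ∅) : SteinerExtreme d T (X ∪ Y) := by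
  have hXTY : X ∩ T ⊆ Y := by
    intro a ha
    by_contra h
    have : a ∈ (X \ Y) ∩ T := ⟨⟨ha.1, h⟩, ha.2⟩
    rw [hXY] at this
    exact this
  have hcut : IsSteinerCut T (X ∪ Y) := by
    constructor
    · obtain ⟨a, ha⟩ := hX.1.1
      exact ⟨a, Or.inl ha.1, ha.2⟩
    · intro h
      apply hY.1.2
      intro t ht
      rcases h ht with h1 | h2
      · exact hXTY ⟨h1, ht⟩
      · exact h2
  refine ⟨hcut, ?_⟩
  have key : ∀ n (Z : Set V), ((X ∪ Y) \ Z).ncard ≤ n →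
      IsSteinerCut T Z → Z ⊂ X ∪ Y → d (X ∪ Y) < d Z := by
    intro n
    induction n with
    | zero =>
      intro Z hn hZ hss
      exfalso
      obtain ⟨u, hu1, hu2⟩ := Set.exists_of_ssubset hss
      have hu : u ∈ (X ∪ Y) \ Z := ⟨hu1, hu2⟩
      have hfin : ((X ∪ Y) \ Z).Finite := Set.toFinite _
      have := (Set.ncard_pos hfin).mpr ⟨u, hu⟩
      omega
    | succ n ih =>
      intro Z hn hZ hss
      by_cases hYZ : Y ⊆ Z
      · -- case Y ⊆ Z : use submodularity with X
        have hZXu : Z ∪ X = X ∪ Y := by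
          apply Set.Subset.antisymm
          · exact Set.union_subset hss.subset Set.subset_union_left
          · exact Set.union_subset Set.subset_union_right
              (hYZ.trans Set.subset_union_left)
        have hZX : Z ∩ X ⊂ X := by
          obtain ⟨u, huXY, huZ⟩ := Set.exists_of_ssubset hss
          have huX : u ∈ X := by
            rcases huXY with h | h
            · exact h
            · exact absurd (hYZ h) huZ
          exact ⟨Set.inter_subset_right, fun h => huZ (h huX).1⟩
        have hZXcut : IsSteinerCut T (Z ∩ X) := by
          constructor
          · obtain ⟨a, ha⟩ := hX.1.1
            exact ⟨a, ⟨hYZ (hXTY ha), ha.1⟩, ha.2⟩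
          · intro h
            exact hX.1.2 (h.trans Set.inter_subset_right)
        have h1 : d X < d (Z ∩ X) := hX.2 _ hZXcut hZX
        have h2 := hsub Z X
        rw [hZXu] at h2
        linarith
      · -- case ¬ Y ⊆ Z : use submodularity with Y
        have hZTY : Z ∩ T ⊆ Y := by
          intro a ha
          rcases hss.subset ha.1 with h | h
          · by_contra hy
            have : a ∈ (X \ Y) ∩ T := ⟨⟨h, hy⟩, ha.2⟩
            rw [hXY] at this
            exact this
          · exact h
        have hZYcut : IsSteinerCut T (Z ∩ Y) := by
          constructor
          · obtain ⟨a, ha⟩ := hZ.1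
            exact ⟨a, ⟨ha.1, hZTY ha⟩, ha.2⟩
          · intro h
            exact hY.1.2 (h.trans Set.inter_subset_right)
        have hZYss : Z ∩ Y ⊂ Y :=
          ⟨Set.inter_subset_right, fun h => hYZ (fun y hy => (h hy).1)⟩
        have h1 : d Y < d (Z ∩ Y) := hY.2 _ hZYcut hZYss
        have h2 := hsub Z Y
        by_cases hE : Z ∪ Y = X ∪ Y
        · rw [hE] at h2
          linarith
        · have hsub2 : Z ∪ Y ⊆ X ∪ Y :=
            Set.union_subset hss.subset Set.subset_union_right
          have hss2 : Z ∪ Y ⊂ X ∪ Y :=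
            ⟨hsub2, fun h => hE (Set.Subset.antisymm hsub2 h)⟩
          have hcut2 : IsSteinerCut T (Z ∪ Y) := by
            constructor
            · obtain ⟨a, ha⟩ := hZ.1
              exact ⟨a, Or.inl ha.1, ha.2⟩
            · intro h
              exact hcut.2 (h.trans hss2.subset)
          have hlt : ((X ∪ Y) \ (Z ∪ Y)).ncard < ((X ∪ Y) \ Z).ncard := by
            obtain ⟨y, hy, hyZ⟩ := Set.not_subset.mp hYZ
            apply Set.ncard_lt_ncard
            · constructor
              · intro a ha
                exact ⟨ha.1, fun h => ha.2 (Or.inl h)⟩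
              · intro h
                have hmem : y ∈ (X ∪ Y) \ Z := ⟨Or.inr hy, hyZ⟩
                exact (h hmem).2 (Or.inr hy)
            · exact Set.toFinite _
          have h3 := ih (Z ∪ Y) (by omega) hcut2 hss2
          linarith
  intro Z hZ hss
  exact key ((X ∪ Y) \ Z).ncard Z le_rfl hZ hss

/-- The supreme set μ(R) is itself extreme with projection R. -/
lemma supreme_spec [Fintype V] (d : Set V → ℝ) (T R : Set V)
    (hsub : ∀ A B : Set V, d (A ∩ B) + d (A ∪ B) ≤ d A + d B)
    (hR : ∃ X, SteinerExtreme d T X ∧ X ∩ T = R) :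
    SteinerExtreme d T (supremeSet d T R) ∧ supremeSet d T R ∩ T = R := by
  set F := {X : Set V | SteinerExtreme d T X ∧ X ∩ T = R} with hFdef
  have hclosed : ∀ X ∈ F, ∀ Y ∈ F, X ∪ Y ∈ F := by
    intro X hXF Y hYF
    have hd : (X \ Y) ∩ T = ∅ := by
      ext a
      simp only [Set.mem_inter_iff, Set.mem_diff, Set.mem_empty_iff_false,
        iff_false, not_and]
      rintro ⟨haX, haY⟩ haT
      have haR : a ∈ R := hXF.2 ▸ (⟨haX, haT⟩ : a ∈ X ∩ T)
      have haY' : a ∈ Y ∩ T := by rw [hYF.2]; exact haR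
      exact haY haY'.1
    refine ⟨extreme_union d T X Y hsub hXF.1 hYF.1 hd, ?_⟩
    rw [Set.union_inter_distrib_right, hXF.2, hYF.2, Set.union_self]
  have hFfin : F.Finite := Set.toFinite F
  have hFne : F.Nonempty := hR
  obtain ⟨M, hMF, hMmax⟩ : ∃ M ∈ F, ∀ M' ∈ F, id M ≤ id M' → id M = id M' := by
    obtain ⟨M, hM⟩ := hFfin.exists_maximal hFne
    exact ⟨M, hM.1, fun M' hM' hle => le_antisymm hle (hM.2 hM' hle)⟩
  have hsup : supremeSet d T R = M := by
    apply Set.Subset.antisymm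
    · apply Set.sUnion_subset
      intro X hXF
      have hXM : X ∪ M ∈ F := hclosed X hXF M hMF
      have heq := hMmax (X ∪ M) hXM Set.subset_union_right
      simp only [id] at heq
      intro a ha
      rw [heq]
      exact Or.inl ha
    · exact Set.subset_sUnion_of_mem hMF
  rw [hsup]
  exact hMF

/-- The supreme sets form a laminar family: no two supreme sets cross; either
they are disjoint or one is contained in the other. -/
theorem supremeSets_laminar [Fintype V] (d : Set V → ℝ) (T R₁ R₂ : Set V)
    (hsub : ∀ A B : Set V, d (A ∩ B) + d (A ∪ B) ≤ d A + d B)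
    (hpos : ∀ A B : Set V, d (A \ B) + d (B \ A) ≤ d A + d B)
    (h4 : ∀ A B : Set V, Crosses A B → max (d A) (d B) < d (A ∩ B) →
      d (A ∪ B) < min (d A) (d B))
    (hR₁ : ∃ X, SteinerExtreme d T X ∧ X ∩ T = R₁)
    (hR₂ : ∃ X, SteinerExtreme d T X ∧ X ∩ T = R₂) :
    Disjoint (supremeSet d T R₁) (supremeSet d T R₂) ∨
      supremeSet d T R₁ ⊆ supremeSet d T R₂ ∨
      supremeSet d T R₂ ⊆ supremeSet d T R₁ := by
  obtain ⟨hA, hAT⟩ := supreme_spec d T R₁ hsub hR₁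
  obtain ⟨hB, hBT⟩ := supreme_spec d T R₂ hsub hR₂
  set A := supremeSet d T R₁ with hAdef
  set B := supremeSet d T R₂ with hBdef
  by_contra h
  push_neg at h
  obtain ⟨hd, hab, hba⟩ := h
  have hcr : Crosses A B := by
    refine ⟨?_, ?_, ?_⟩
    · rw [Set.not_disjoint_iff] at hd
      obtain ⟨x, hx1, hx2⟩ := hd
      exact ⟨x, hx1, hx2⟩
    · obtain ⟨a, ha1, ha2⟩ := Set.not_subset.mp hab
      exact ⟨a, ha1, ha2⟩
    · obtain ⟨b, hb1, hb2⟩ := Set.not_subset.mp hba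
      exact ⟨b, hb1, hb2⟩
  rcases cross_noterm d T A B hpos hA hB hcr with hnt | hnt
  · -- (A \ B) ∩ T = ∅ : then A ∪ B is in the family for R₂, so A ⊆ B
    have hext : SteinerExtreme d T (A ∪ B) := extreme_union d T A B hsub hA hB hnt
    have hproj : (A ∪ B) ∩ T = R₂ := by
      rw [Set.union_inter_distrib_right, hAT, hBT]
      apply Set.union_eq_self_of_subset_left
      rw [← hAT, ← hBT]
      intro a ha
      by_contra hy
      have : a ∈ (A \ B) ∩ T := ⟨⟨ha.1, fun h => hy ⟨h, ha.2⟩⟩, ha.2⟩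
      rw [hnt] at this
      exact this
    have hmem : A ∪ B ∈ {X : Set V | SteinerExtreme d T X ∧ X ∩ T = R₂} :=
      ⟨hext, hproj⟩
    have hsub' : A ∪ B ⊆ B := by
      rw [hBdef]
      exact Set.subset_sUnion_of_mem hmem
    exact hab (Set.subset_union_left.trans hsub')
  · -- symmetric case
    have hext : SteinerExtreme d T (B ∪ A) := extreme_union d T B A hsub hB hA hnt
    have hproj : (B ∪ A) ∩ T = R₁ := by
      rw [Set.union_inter_distrib_right, hAT, hBT]
      apply Set.union_eq_self_of_subset_left
      rw [← hAT, ← hBT]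
      intro a ha
      by_contra hy
      have : a ∈ (B \ A) ∩ T := ⟨⟨ha.1, fun h => hy ⟨h, ha.2⟩⟩, ha.2⟩
      rw [hnt] at this
      exact this
    have hmem : B ∪ A ∈ {X : Set V | SteinerExtreme d T X ∧ X ∩ T = R₁} :=
      ⟨hext, hproj⟩
    have hsub' : B ∪ A ⊆ A := by
      rw [hAdef]
      exact Set.subset_sUnion_of_mem hmem
    exact hba (Set.subset_union_left.trans hsub')
end

section
/- Suppose ct(s,φ) partitions T into nonempty T₁ = {t ∈ T : λ(s,t) ≥ φ} and T₂ = T\T₁, and let S be the T₁-side of the earliest T₁-T₂ minimum cut. Then S does not cross any supreme set: for every supreme set X = μ(R), one of S ⊆ X, X ⊆ S, or S ∩ X = ∅ holds (up to the trivial intersections forced by terminals). -/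
variable {V : Type*}

def IsSupreme (d : Set V → ℝ) (T X : Set V) : Prop :=
  SteinerExtreme d T X ∧ ∀ Y, SteinerExtreme d T Y → Y ∩ T = X ∩ T → Y ⊆ X

def IsStCut (s t : V) (S : Set V) : Prop := t ∈ S ∧ s ∉ S

def cutThreshold (lam : V → V → ℝ) (s : V) (φ : ℝ) : Set V :=
  {t | φ ≤ lam s t} ∪ {s}

def IsABCut (A B S : Set V) : Prop := A ⊆ S ∧ S ∩ B = ∅

def IsABMinCut (d : Set V → ℝ) (A B S : Set V) : Prop :=
  IsABCut A B S ∧ ∀ S', IsABCut A B S' → d S ≤ d S'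

def IsEarliestABMinCut (d : Set V → ℝ) (A B S : Set V) : Prop :=
  IsABMinCut d A B S ∧ ∀ S', IsABMinCut d A B S' → S ⊆ S'

/-!
An extreme set `X` loses value when cut down to a proper subset with the same terminals. Hence, by
submodularity, `X ⊆ A` whenever `A` meets the projection of `X` and `d A ≤ d (A ∪ X)`; by
posimodularity, `A ∩ X = ∅` whenever `A` misses part of that projection and `d A ≤ d (A \ X)`.
If the projection of the supreme set `X` avoids `T₂` (resp. `T₁`), the first (resp. second) fact
applied to `A = S` gives `X ⊆ S` (resp. `S ∩ X = ∅`). If it contains `t₁ ∈ T₁` and `t₂ ∈ T₂`, then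
`X` contains `s` and all of `T₁`: otherwise the first fact applied to a minimum `s`-`t₂` cut `A`
forces `X ⊆ A`, yet `A` misses `s` and every `t` with `λ(s,t) > λ(s,t₂)`. In that last case `S ∩ X`
is again a `T₁`-`T₂` cut, while `X` has the least value among the supersets with its projection;
submodularity then makes `S ∩ X` a minimum cut, and earliness gives `S ⊆ X`.
-/

section Extreme

variable {d : Set V → ℝ} {T X : Set V}

theorem SteinerExtreme.lt_inter {Y : Set V} (hX : SteinerExtreme d T X)
    (hne : (Y ∩ X ∩ T).Nonempty) (hXY : ¬ X ⊆ Y) : d X < d (Y ∩ X) :=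
  hX.2 _ ⟨hne, fun hT => hX.1.2 (hT.trans Set.inter_subset_right)⟩
    (Set.inter_ssubset_right_iff.2 hXY)

theorem SteinerExtreme.subset_of_le_union {A : Set V}
    (hsub : ∀ A B : Set V, d (A ∩ B) + d (A ∪ B) ≤ d A + d B) (hX : SteinerExtreme d T X)
    (hne : (A ∩ X ∩ T).Nonempty) (hle : d A ≤ d (A ∪ X)) : X ⊆ A := by
  by_contra hXA
  have := hX.lt_inter hne hXA
  linarith [hsub A X]

theorem SteinerExtreme.inter_eq_empty_of_le_diff {A : Set V}
    (hpos : ∀ A B : Set V, d (A \ B) + d (B \ A) ≤ d A + d B) (hX : SteinerExtreme d T X)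
    (hne : ((X \ A) ∩ T).Nonempty) (hle : d A ≤ d (A \ X)) : A ∩ X = ∅ := by
  by_contra hAX
  have hXA : ¬ X ⊆ Aᶜ := fun h =>
    hAX (Set.eq_empty_of_forall_notMem fun v hv => h hv.2 hv.1)
  have := hX.lt_inter (by rwa [← Set.sdiff_eq_compl_inter]) hXA
  rw [← Set.sdiff_eq_compl_inter] at this
  linarith [hpos A X]

-- A proper subset `W ⊉ X` of `Z` loses to `W ∪ X`, by submodularity and the extremality of `X`.
theorem SteinerExtreme.of_minimal_between {Y Z : Set V}
    (hsub : ∀ A B : Set V, d (A ∩ B) + d (A ∪ B) ≤ d A + d B) (hX : SteinerExtreme d T X)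
    (hYT : Y ∩ T = X ∩ T) (hXZ : X ⊆ Z) (hZY : Z ⊆ Y)
    (hmin : ∀ W, X ⊆ W → W ⊆ Y → d Z ≤ d W) (hstrict : ∀ W, X ⊆ W → W ⊂ Z → d Z < d W) :
    SteinerExtreme d T Z := by
  have hZT : Z ∩ T ⊆ X ∩ T := hYT ▸ Set.inter_subset_inter_left T hZY
  refine ⟨⟨hX.1.1.mono (Set.inter_subset_inter_left T hXZ), fun hT => hX.1.2 ?_⟩, ?_⟩
  · exact fun v hv => (hZT ⟨hT hv, hv⟩).1
  intro W hW hWZ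
  by_cases hXW : X ⊆ W
  · exact hstrict W hXW hWZ
  have hne : (W ∩ X ∩ T).Nonempty := by
    obtain ⟨v, hvW, hvT⟩ := hW.1
    exact ⟨v, ⟨hvW, (hZT ⟨hWZ.subset hvW, hvT⟩).1⟩, hvT⟩
  have hXWX := hX.lt_inter hne hXW
  have hZWX := hmin (W ∪ X) Set.subset_union_right
    (Set.union_subset (hWZ.subset.trans hZY) (hXZ.trans hZY))
  linarith [hsub W X]

theorem IsSupreme.le_of_superset [Finite V] {Y : Set V}
    (hsub : ∀ A B : Set V, d (A ∩ B) + d (A ∪ B) ≤ d A + d B) (hX : IsSupreme d T X)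
    (hXY : X ⊆ Y) (hYT : Y ∩ T = X ∩ T) : d X ≤ d Y := by
  obtain ⟨M, ⟨hXM, hMY⟩, hM⟩ :=
    Set.exists_min_image {W | X ⊆ W ∧ W ⊆ Y} d (Set.toFinite _) ⟨X, subset_rfl, hXY⟩
  obtain ⟨Z, hZmin⟩ :=
    (Set.toFinite {W | X ⊆ W ∧ W ⊆ Y ∧ d W = d M}).exists_minimal ⟨M, hXM, hMY, rfl⟩
  obtain ⟨hXZ, hZY, hZM⟩ := hZmin.prop
  have hmin : ∀ W, X ⊆ W → W ⊆ Y → d Z ≤ d W := fun W hXW hWY => hZM ▸ hM W ⟨hXW, hWY⟩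
  have hstrict : ∀ W, X ⊆ W → W ⊂ Z → d Z < d W := by
    intro W hXW hWZ
    refine (hmin W hXW (hWZ.subset.trans hZY)).lt_of_ne fun hdW => ?_
    exact hZmin.not_lt ⟨hXW, hWZ.subset.trans hZY, hdW ▸ hZM⟩ hWZ
  have hZ := hX.1.of_minimal_between hsub hYT hXZ hZY hmin hstrict
  have hZX : Z ⊆ X := hX.2 Z hZ <| Set.Subset.antisymm
    (hYT ▸ Set.inter_subset_inter_left T hZY) (Set.inter_subset_inter_left T hXZ)
  exact Set.Subset.antisymm hZX hXZ ▸ hmin Y hXY subset_rfl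

end Extreme

section MinCut

variable {A B S Y : Set V}

theorem IsABCut.union (hS : IsABCut A B S) (hY : Y ∩ B = ∅) : IsABCut A B (S ∪ Y) := by
  refine ⟨hS.1.trans Set.subset_union_left, ?_⟩
  rw [Set.union_inter_distrib_right, hS.2, hY, Set.empty_union]

theorem IsABCut.diff (hS : IsABCut A B S) (hY : A ∩ Y = ∅) : IsABCut A B (S \ Y) := by
  refine ⟨fun v hv => ⟨hS.1 hv, fun hvY => hY.subset ⟨hv, hvY⟩⟩, ?_⟩
  exact Set.subset_eq_empty (Set.inter_subset_inter_left B Set.sdiff_subset) hS.2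

theorem IsABCut.inter (hS : IsABCut A B S) (hY : A ⊆ Y) : IsABCut A B (S ∩ Y) :=
  ⟨Set.subset_inter hS.1 hY,
    Set.subset_eq_empty (Set.inter_subset_inter_left B Set.inter_subset_left) hS.2⟩

theorem IsEarliestABMinCut.subset_of_isSupreme [Finite V] {d : Set V → ℝ} {T X : Set V}
    (hsub : ∀ A B : Set V, d (A ∩ B) + d (A ∪ B) ≤ d A + d B)
    (hS : IsEarliestABMinCut d A B S) (hX : IsSupreme d T X) (hAX : A ⊆ X)
    (hST : S ∩ T ⊆ X) : S ⊆ X := by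
  have hcut := hS.1.1.inter hAX
  have hSX := hS.1.2 _ hcut
  have hXSX : d X ≤ d (S ∪ X) := hX.le_of_superset hsub Set.subset_union_right <| by
    rw [Set.union_inter_distrib_right, Set.union_eq_right]
    exact Set.subset_inter hST Set.inter_subset_right
  have hmin : IsABMinCut d A B (S ∩ X) :=
    ⟨hcut, fun S' hS' => by linarith [hsub S X, hS.1.2 S' hS']⟩
  exact (hS.2 _ hmin).trans Set.inter_subset_right

end MinCut

section Threshold

variable {d : Set V → ℝ} {T X : Set V} {lam : V → V → ℝ} {s t t₂ : V}

theorem self_mem_cutThreshold (φ : ℝ) : s ∈ cutThreshold lam s φ := Or.inr rfl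

theorem lam_lt_lam_of_mem_cutThreshold {φ : ℝ} (ht : t ∈ cutThreshold lam s φ) (hts : t ≠ s)
    (ht₂ : t₂ ∉ cutThreshold lam s φ) : lam s t₂ < lam s t := by
  rcases ht with ht | ht
  · exact lt_of_lt_of_le (not_le.1 fun h => ht₂ (Or.inl h)) ht
  · exact absurd ht hts

variable (hsub : ∀ A B : Set V, d (A ∩ B) + d (A ∪ B) ≤ d A + d B)
  (hlam_lb : ∀ t S', IsStCut s t S' → lam s t ≤ d S')
  (hlam_att : ∀ t, t ≠ s → ∃ S', IsStCut s t S' ∧ d S' = lam s t)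
include hsub hlam_lb hlam_att

theorem SteinerExtreme.not_isStCut_of_lam_lt (hX : SteinerExtreme d T X) (ht₂X : t₂ ∈ X)
    (ht₂T : t₂ ∈ T) (hlt : lam s t₂ < lam s t) (hcut : IsStCut s t X) : False := by
  obtain ⟨A, ⟨ht₂A, hsA⟩, hdA⟩ := hlam_att t₂ fun h => hcut.2 (h ▸ ht₂X)
  have htA : t ∉ A := fun h => by linarith [hlam_lb t A ⟨h, hsA⟩]
  have hle : d A ≤ d (A ∪ X) :=
    hdA ▸ hlam_lb t₂ _ ⟨Or.inl ht₂A, fun h => h.elim hsA hcut.2⟩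
  exact htA (hX.subset_of_le_union hsub ⟨t₂, ⟨ht₂A, ht₂X⟩, ht₂T⟩ hle hcut.1)

theorem SteinerExtreme.not_isStCut_compl_of_lam_lt (hsymm : ∀ A : Set V, d Aᶜ = d A)
    (hX : SteinerExtreme d T X) (ht₂X : t₂ ∈ X) (ht₂T : t₂ ∈ T) (ht₂s : t₂ ≠ s)
    (hlt : lam s t₂ < lam s t) (hcut : IsStCut s t Xᶜ) : False := by
  obtain ⟨A, ⟨ht₂A, hsA⟩, hdA⟩ := hlam_att t₂ ht₂s
  have htA : t ∉ A := fun h => by linarith [hlam_lb t A ⟨h, hsA⟩]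
  have hle : d A ≤ d (A ∪ X) := by
    have := hlam_lb t (A ∪ X)ᶜ
      ⟨fun h => h.elim htA hcut.1, fun h => hcut.2 fun hsX => h (Or.inr hsX)⟩
    linarith [hsymm (A ∪ X)]
  exact hsA (hX.subset_of_le_union hsub ⟨t₂, ⟨ht₂A, ht₂X⟩, ht₂T⟩ hle (not_not.1 hcut.2))

end Threshold

theorem earliest_ct_minCut_uncross_supreme_general [Fintype V] (d : Set V → ℝ) (T : Set V)
    (lam : V → V → ℝ) (s : V) (φ : ℝ) (S X : Set V)
    (hsub : ∀ A B : Set V, d (A ∩ B) + d (A ∪ B) ≤ d A + d B)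
    (hpos : ∀ A B : Set V, d (A \ B) + d (B \ A) ≤ d A + d B)
    (hsymm : ∀ A : Set V, d Aᶜ = d A)
    (hlam_lb : ∀ t S', IsStCut s t S' → lam s t ≤ d S')
    (hlam_att : ∀ t, t ≠ s → ∃ S', IsStCut s t S' ∧ d S' = lam s t)
    (hS : IsEarliestABMinCut d (cutThreshold lam s φ ∩ T) (T \ cutThreshold lam s φ) S)
    (hX : IsSupreme d T X) :
    S ⊆ X ∨ X ⊆ S ∨ S ∩ X = ∅ := by
  set ct := cutThreshold lam s φ
  have hST : S ∩ T ⊆ ct := fun v hv => by_contra fun hv' => hS.1.1.2.subset ⟨hv.1, hv.2, hv'⟩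
  rcases (X ∩ (T \ ct)).eq_empty_or_nonempty with hXT₂ | ⟨t₂, ht₂X, ht₂T, ht₂ct⟩
  · have hXTS : X ∩ T ⊆ S := fun v hv =>
      hS.1.1.1 ⟨by_contra fun h => hXT₂.subset ⟨hv.1, hv.2, h⟩, hv.2⟩
    refine Or.inr (Or.inl (hX.1.subset_of_le_union hsub ?_ (hS.1.2 _ (hS.1.1.union hXT₂))))
    obtain ⟨v, hv⟩ := hX.1.1.1
    exact ⟨v, ⟨hXTS hv, hv.1⟩, hv.2⟩
  rcases (ct ∩ T ∩ X).eq_empty_or_nonempty with hXT₁ | ⟨t₁, ⟨ht₁ct, -⟩, ht₁X⟩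
  · refine Or.inr (Or.inr (hX.1.inter_eq_empty_of_le_diff hpos ?_ (hS.1.2 _ (hS.1.1.diff hXT₁))))
    obtain ⟨v, hv⟩ := hX.1.1.1
    exact ⟨v, ⟨hv.1, fun hvS => hXT₁.subset ⟨⟨hST ⟨hvS, hv.2⟩, hv.2⟩, hv.1⟩⟩, hv.2⟩
  have hlt {t : V} (ht : t ∈ ct) (hts : t ≠ s) := lam_lt_lam_of_mem_cutThreshold ht hts ht₂ct
  by_cases hsX : s ∈ X
  · by_cases hT₁X : ct ∩ T ⊆ X
    · exact Or.inl (hS.subset_of_isSupreme hsub hX hT₁X fun v hv => hT₁X ⟨hST hv, hv.2⟩)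
    obtain ⟨t₀, ⟨ht₀ct, -⟩, ht₀X⟩ := Set.not_subset.1 hT₁X
    have ht₀s : t₀ ≠ s := fun h => ht₀X (h ▸ hsX)
    exact (hX.1.not_isStCut_compl_of_lam_lt hsub hlam_lb hlam_att hsymm ht₂X ht₂T
      (fun h => ht₂ct (h ▸ self_mem_cutThreshold φ)) (hlt ht₀ct ht₀s) ⟨ht₀X, not_not.2 hsX⟩).elim
  · have ht₁s : t₁ ≠ s := fun h => hsX (h ▸ ht₁X)
    exact (hX.1.not_isStCut_of_lam_lt hsub hlam_lb hlam_att ht₂X ht₂T (hlt ht₁ct ht₁s)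
      ⟨ht₁X, hsX⟩).elim

/-- Suppose the cut threshold `ct(s,φ)` partitions the terminals into nonempty
sides `T₁` and `T₂ = T \ T₁`, and let `S` be the `T₁`-side of the earliest
`T₁`-`T₂` min cut. Then `S` does not cross any supreme set `X`. -/
theorem earliest_ct_minCut_uncross_supreme [Fintype V] (d : Set V → ℝ) (T : Set V)
    (lam : V → V → ℝ) (s : V) (φ : ℝ) (S X : Set V)
    (hsub : ∀ A B : Set V, d (A ∩ B) + d (A ∪ B) ≤ d A + d B)
    (hpos : ∀ A B : Set V, d (A \ B) + d (B \ A) ≤ d A + d B)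
    (h4 : ∀ A B : Set V, Crosses A B → max (d A) (d B) < d (A ∩ B) →
      d (A ∪ B) < min (d A) (d B))
    (hsymm : ∀ A : Set V, d Aᶜ = d A)
    (hlam_lb : ∀ t S', IsStCut s t S' → lam s t ≤ d S')
    (hlam_att : ∀ t, t ≠ s → ∃ S', IsStCut s t S' ∧ d S' = lam s t)
    (hlam_uniq : ∀ t, t ≠ s → ∃! S', IsStCut s t S' ∧ d S' = lam s t)
    (hT₁ : (cutThreshold lam s φ ∩ T).Nonempty)
    (hT₂ : (T \ cutThreshold lam s φ).Nonempty)
    (hS : IsEarliestABMinCut d (cutThreshold lam s φ ∩ T) (T \ cutThreshold lam s φ) S)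
    (hX : IsSupreme d T X) :
    S ⊆ X ∨ X ⊆ S ∨ S ∩ X = ∅ :=
  earliest_ct_minCut_uncross_supreme_general d T lam s φ S X hsub hpos hsymm hlam_lb hlam_att hS hX
end

section
/- For every R ⊆ T such that μ(R) is defined under the original weights w, the supreme set under perturbed weights μ̃(R) is defined and d(μ̃(R)) = d(μ(R)), where d is the cut value under the original weights. -/
variable {V : Type*}

lemma extreme_subset_le {d : Set V → ℝ} {T X Y : Set V}
    (hX : SteinerExtreme d T X) (hY : IsSteinerCut T Y) (hYX : Y ⊆ X) :
    d X ≤ d Y := by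
  rcases hYX.ssubset_or_eq with h | h
  · exact (hX.2 Y hY h).le
  · rw [h]

lemma union_extreme [Fintype V] {d : Set V → ℝ} {T R X Y : Set V}
    (hsub : ∀ A B : Set V, d (A ∩ B) + d (A ∪ B) ≤ d A + d B)
    (h4 : ∀ A B : Set V, Crosses A B → max (d A) (d B) < d (A ∩ B) →
      d (A ∪ B) < min (d A) (d B))
    (hX : SteinerExtreme d T X) (hXR : X ∩ T = R)
    (hY : SteinerExtreme d T Y) (hYR : Y ∩ T = R) :
    SteinerExtreme d T (X ∪ Y) := by
  by_cases hXY : X ⊆ Y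
  · rwa [Set.union_eq_self_of_subset_left hXY]
  by_cases hYX : Y ⊆ X
  · rwa [Set.union_eq_self_of_subset_right hYX]
  -- crossing case
  have hRX : R ⊆ X := hXR ▸ Set.inter_subset_left
  have hRY : R ⊆ Y := hYR ▸ Set.inter_subset_left
  have hRT : R ⊆ T := hXR ▸ Set.inter_subset_right
  have hRne : R.Nonempty := hXR ▸ hX.1.1
  have hcr : Crosses X Y := by
    refine ⟨?_, ?_, ?_⟩
    · exact hRne.mono (Set.subset_inter hRX hRY)
    · exact Set.diff_nonempty.mpr hXY
    · exact Set.diff_nonempty.mpr hYX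
  have hInt : IsSteinerCut T (X ∩ Y) := by
    refine ⟨hRne.mono (Set.subset_inter (Set.subset_inter hRX hRY) hRT), fun h => hX.1.2 ?_⟩
    exact h.trans Set.inter_subset_left
  have hdX : d X < d (X ∩ Y) :=
    hX.2 _ hInt (ssubset_of_subset_of_ne Set.inter_subset_left
      (fun h => hXY (by rw [← h]; exact Set.inter_subset_right)))
  have hdY : d Y < d (X ∩ Y) :=
    hY.2 _ hInt (ssubset_of_subset_of_ne Set.inter_subset_right
      (fun h => hYX (by rw [← h]; exact Set.inter_subset_left)))
  have hU : d (X ∪ Y) < min (d X) (d Y) := h4 X Y hcr (max_lt hdX hdY)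
  have hUT : (X ∪ Y) ∩ T = R := by
    rw [Set.union_inter_distrib_right, hXR, hYR, Set.union_self]
  have hUcut : IsSteinerCut T (X ∪ Y) := by
    refine ⟨hUT ▸ hRne, fun h => ?_⟩
    obtain ⟨t, htT, htX⟩ := Set.not_subset.mp hX.1.2
    rcases h htT with ht | ht
    · exact htX ht
    · exact htX (hRX ((hYR ▸ Set.mem_inter ht htT : t ∈ R)))
  refine ⟨hUcut, fun W hW hWss => ?_⟩
  by_contra hle
  push_neg at hle
  -- family of violators; take a maximal one
  set fam : Set (Set V) := {M | M ⊂ X ∪ Y ∧ IsSteinerCut T M ∧ d M ≤ d (X ∪ Y)} with hfam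
  have hWfam : W ∈ fam := ⟨hWss, hW, hle⟩
  obtain ⟨M, hMfam, hMmax⟩ : ∃ M ∈ fam, ∀ M' ∈ fam, id M ≤ id M' → id M = id M' := by
    obtain ⟨M, hM, hmax⟩ := Set.Finite.exists_maximalFor id fam (Set.toFinite fam) ⟨W, hWfam⟩
    exact ⟨M, hM, fun M' hM' h => le_antisymm h (hmax hM' h)⟩
  obtain ⟨hMss, hMcut, hMd⟩ := hMfam
  have hMT : M ∩ T ⊆ R := hUT ▸ Set.inter_subset_inter_left T hMss.subset
  -- key: no member A ∈ {X, Y} can fail to be inside M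
  have key : ∀ A, SteinerExtreme d T A → A ∩ T = R → A ⊆ X ∪ Y → ¬ A ⊆ M → False := by
    intro A hA hAR hAU hAM
    have hRA : R ⊆ A := hAR ▸ Set.inter_subset_left
    have hMAcut : IsSteinerCut T (M ∩ A) := by
      refine ⟨?_, fun h => hMcut.2 (h.trans Set.inter_subset_left)⟩
      obtain ⟨t, htM, htT⟩ := hMcut.1
      exact ⟨t, ⟨htM, hRA (hMT ⟨htM, htT⟩)⟩, htT⟩
    have hMA : M ∩ A ⊂ A :=
      ssubset_of_subset_of_ne Set.inter_subset_right
        (fun h => hAM (by rw [← h]; exact Set.inter_subset_left))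
    have hdA : d A < d (M ∩ A) := hA.2 _ hMAcut hMA
    have hMun : d (M ∪ A) < d M := by
      have := hsub M A
      linarith
    have hMunU : M ∪ A ⊆ X ∪ Y := Set.union_subset hMss.subset hAU
    have hMunCut : IsSteinerCut T (M ∪ A) := by
      refine ⟨?_, fun h => hUcut.2 (h.trans hMunU)⟩
      obtain ⟨t, htM, htT⟩ := hMcut.1
      exact ⟨t, Or.inl htM, htT⟩
    rcases hMunU.ssubset_or_eq with h | h
    · have : M ∪ A ∈ fam := ⟨h, hMunCut, by linarith⟩
      have h2 := hMmax _ this Set.subset_union_left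
      simp only [id_eq] at h2
      exact hAM (by rw [h2]; exact Set.subset_union_right)
    · rw [h] at hMun; linarith
  have hXM : ¬ (X ⊆ M ∧ Y ⊆ M) := by
    rintro ⟨h1, h2⟩
    exact hMss.not_subset (Set.union_subset h1 h2)
  by_cases hXsub : X ⊆ M
  · exact key Y hY hYR Set.subset_union_right (fun h => hXM ⟨hXsub, h⟩)
  · exact key X hX hXR Set.subset_union_left hXsub

lemma sUnion_extreme [Fintype V] {d : Set V → ℝ} {T R : Set V}
    (hsub : ∀ A B : Set V, d (A ∩ B) + d (A ∪ B) ≤ d A + d B)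
    (h4 : ∀ A B : Set V, Crosses A B → max (d A) (d B) < d (A ∩ B) →
      d (A ∪ B) < min (d A) (d B))
    (F : Set (Set V)) (hF : ∀ X ∈ F, SteinerExtreme d T X ∧ X ∩ T = R)
    (hne : F.Nonempty) :
    SteinerExtreme d T (⋃₀ F) ∧ (⋃₀ F) ∩ T = R := by
  refine Set.Finite.induction_on
    (motive := fun F _ => (∀ X ∈ F, SteinerExtreme d T X ∧ X ∩ T = R) → F.Nonempty →
      SteinerExtreme d T (⋃₀ F) ∧ (⋃₀ F) ∩ T = R)
    F (Set.toFinite F) (fun _ hne' => absurd hne' Set.not_nonempty_empty) ?_ hF hne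
  intro a s _ _ ih hF' _
  rw [Set.sUnion_insert]
  obtain ⟨haext, haR⟩ := hF' a (Set.mem_insert a s)
  by_cases hsne : s.Nonempty
  · obtain ⟨hUext, hUR⟩ := ih (fun X hX => hF' X (Set.mem_insert_of_mem a hX)) hsne
    constructor
    · exact union_extreme hsub h4 haext haR hUext hUR
    · rw [Set.union_inter_distrib_right, haR, hUR, Set.union_self]
  · rw [Set.not_nonempty_iff_eq_empty] at hsne
    subst hsne
    rw [Set.sUnion_empty, Set.union_empty]
    exact ⟨haext, haR⟩

lemma supreme_extreme [Fintype V] {d : Set V → ℝ} {T R : Set V}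
    (hsub : ∀ A B : Set V, d (A ∩ B) + d (A ∪ B) ≤ d A + d B)
    (h4 : ∀ A B : Set V, Crosses A B → max (d A) (d B) < d (A ∩ B) →
      d (A ∪ B) < min (d A) (d B))
    (hR : ∃ X, SteinerExtreme d T X ∧ X ∩ T = R) :
    SteinerExtreme d T (supremeSet d T R) ∧ (supremeSet d T R) ∩ T = R := by
  obtain ⟨X, hX⟩ := hR
  exact sUnion_extreme hsub h4 _ (fun Y hY => hY) ⟨X, hX⟩

/-- If `μ(R)` is defined under the original cut function `d`, then the supreme
set `μ̃(R)` under the perturbed cut function `d'` is defined, and its cut value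
under the *original* weights equals that of `μ(R)`. -/
theorem perturbed_supreme_value [Fintype V] (d d' : Set V → ℝ) (T R : Set V)
    (horder : ∀ A B : Set V, d A < d B → d' A < d' B)
    (hsub : ∀ A B : Set V, d (A ∩ B) + d (A ∪ B) ≤ d A + d B)
    (hpos : ∀ A B : Set V, d (A \ B) + d (B \ A) ≤ d A + d B)
    (h4 : ∀ A B : Set V, Crosses A B → max (d A) (d B) < d (A ∩ B) →
      d (A ∪ B) < min (d A) (d B))
    (hsub' : ∀ A B : Set V, d' (A ∩ B) + d' (A ∪ B) ≤ d' A + d' B)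
    (hpos' : ∀ A B : Set V, d' (A \ B) + d' (B \ A) ≤ d' A + d' B)
    (h4' : ∀ A B : Set V, Crosses A B → max (d' A) (d' B) < d' (A ∩ B) →
      d' (A ∪ B) < min (d' A) (d' B))
    (hR : ∃ X, SteinerExtreme d T X ∧ X ∩ T = R) :
    (∃ X, SteinerExtreme d' T X ∧ X ∩ T = R) ∧
      d (supremeSet d' T R) = d (supremeSet d T R) := by
  -- extreme under d implies extreme under d'
  have hd'ext : ∀ X, SteinerExtreme d T X → SteinerExtreme d' T X := fun X hX =>
    ⟨hX.1, fun Y hY hYX => horder _ _ (hX.2 Y hY hYX)⟩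
  have hcontra : ∀ A B : Set V, d' A < d' B → d A ≤ d B := by
    intro A B h
    by_contra hc
    push_neg at hc
    exact absurd (horder B A hc) (asymm h)
  obtain ⟨X0, hX0, hX0R⟩ := hR
  have hR' : ∃ X, SteinerExtreme d' T X ∧ X ∩ T = R := ⟨X0, hd'ext _ hX0, hX0R⟩
  obtain ⟨hμext, hμT⟩ := supreme_extreme hsub h4 ⟨X0, hX0, hX0R⟩
  obtain ⟨hμ'ext, hμ'T⟩ := supreme_extreme hsub' h4' hR'
  set μ := supremeSet d T R with hμ
  set μ' := supremeSet d' T R with hμ'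
  refine ⟨hR', ?_⟩
  have hsubμ : μ ⊆ μ' := by
    apply Set.sUnion_subset
    intro X hX
    exact Set.subset_sUnion_of_mem ⟨hd'ext X hX.1, hX.2⟩
  have h1 : d μ' ≤ d μ := by
    rcases hsubμ.ssubset_or_eq with h | h
    · exact hcontra _ _ (hμ'ext.2 μ hμext.1 h)
    · rw [h]
  have h2 : d μ ≤ d μ' := by
    by_contra h
    push_neg at h
    -- minimal violator inside μ'
    set fam : Set (Set V) := {Z | Z ⊆ μ' ∧ IsSteinerCut T Z ∧ d Z ≤ d μ'} with hfam
    obtain ⟨Z, hZfam, hZmin⟩ : ∃ Z ∈ fam, ∀ Z' ∈ fam, id Z' ≤ id Z → id Z = id Z' := by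
      obtain ⟨Z, hZ, hmin⟩ := Set.Finite.exists_minimalFor id fam (Set.toFinite fam)
        ⟨μ', subset_rfl, hμ'ext.1, le_rfl⟩
      exact ⟨Z, hZ, fun Z' hZ' h => le_antisymm (hmin hZ' h) h⟩
    obtain ⟨hZμ', hZcut, hZd⟩ := hZfam
    have hZext : SteinerExtreme d T Z := by
      refine ⟨hZcut, fun W hW hWZ => ?_⟩
      by_contra hc
      push_neg at hc
      have hWfam : W ∈ fam := ⟨hWZ.subset.trans hZμ', hW, le_trans hc hZd⟩
      have h3 := hZmin W hWfam hWZ.subset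
      simp only [id_eq] at h3
      exact hWZ.ne h3.symm
    have hZT : Z ∩ T ⊆ R := hμ'T ▸ Set.inter_subset_inter_left T hZμ'
    rcases hZμ'.ssubset_or_eq with hZss | hZeq
    · -- Z ⊊ μ'
      have hdZ : d Z = d μ' :=
        le_antisymm hZd (hcontra _ _ (hμ'ext.2 Z hZcut hZss))
      by_cases hZμ : Z ⊆ μ
      · have := extreme_subset_le hμext hZcut hZμ
        linarith
      · have hRμ : R ⊆ μ := hμT ▸ Set.inter_subset_left
        have hZμcut : IsSteinerCut T (Z ∩ μ) := by
          refine ⟨?_, fun hc => hZcut.2 (hc.trans Set.inter_subset_left)⟩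
          obtain ⟨t, htZ, htT⟩ := hZcut.1
          exact ⟨t, ⟨htZ, hRμ (hZT ⟨htZ, htT⟩)⟩, htT⟩
        by_cases hμZ : μ ⊆ Z
        · -- then Z has projection R, hence Z ⊆ μ, contradiction
          have hZR : Z ∩ T = R :=
            le_antisymm hZT (hμT ▸ Set.inter_subset_inter_left T hμZ)
          exact hZμ (Set.subset_sUnion_of_mem ⟨hZext, hZR⟩)
        · have hZμZ : Z ∩ μ ⊂ Z :=
            ssubset_of_subset_of_ne Set.inter_subset_left
              (fun hc => hZμ (by rw [← hc]; exact Set.inter_subset_right))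
          have hZμμ : Z ∩ μ ⊂ μ :=
            ssubset_of_subset_of_ne Set.inter_subset_right
              (fun hc => hμZ (by rw [← hc]; exact Set.inter_subset_left))
          have hdZint : d Z < d (Z ∩ μ) := hZext.2 _ hZμcut hZμZ
          have hdμint : d μ < d (Z ∩ μ) := hμext.2 _ hZμcut hZμμ
          have hcr : Crosses Z μ := by
            refine ⟨hZμcut.1.mono Set.inter_subset_left, ?_, ?_⟩
            · exact Set.diff_nonempty.mpr hZμ
            · exact Set.diff_nonempty.mpr hμZ
          have hUn : d (Z ∪ μ) < min (d Z) (d μ) := h4 Z μ hcr (max_lt hdZint hdμint)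
          have hUnμ' : Z ∪ μ ⊆ μ' := Set.union_subset hZμ' hsubμ
          have hUnCut : IsSteinerCut T (Z ∪ μ) := by
            refine ⟨?_, fun hc => hμ'ext.1.2 (hc.trans hUnμ')⟩
            obtain ⟨t, htZ, htT⟩ := hZcut.1
            exact ⟨t, Or.inl htZ, htT⟩
          have hUnlt : d (Z ∪ μ) < d μ' := by
            calc d (Z ∪ μ) < min (d Z) (d μ) := hUn
              _ ≤ d Z := min_le_left _ _
              _ = d μ' := hdZ
          rcases hUnμ'.ssubset_or_eq with hss | heq
          · have := hcontra _ _ (hμ'ext.2 _ hUnCut hss)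
            linarith
          · rw [heq] at hUnlt; linarith
    · -- Z = μ' : μ' is d-extreme with projection R, so μ' ⊆ μ
      have hZR : Z ∩ T = R := by rw [hZeq]; exact hμ'T
      have hsb : Z ⊆ μ := Set.subset_sUnion_of_mem ⟨hZext, hZR⟩
      have heq : μ = μ' := le_antisymm hsubμ (hZeq ▸ hsb)
      rw [heq] at h
      exact lt_irrefl _ h
  linarith
end
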